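/- arXiv:2408.04364 — 3 statements merged into one kernel-verified Lean document; each statement's English description precedes it below -/
import Mathlib

section
/- For the wreath product permutation built from η ∈ S_n and γ_1,...,γ_n ∈ S_k, the length of the longest increasing subsequence satisfies L(σ) ≤ L(η) · max_{1≤i≤n} L(γ_i), where L denotes longest increasing subsequence length. -/
open Finset

/-- Length of the longest increasing subsequence of a permutation of `Fin m`:
the largest cardinality of a set of positions on which the permutation is strictly
increasing. -/
noncomputable def lisLen {m : ℕ} (σ : Equiv.Perm (Fin m)) : ℕ :=
  sSup {c | ∃ s : Finset (Fin m), StrictMonoOn σ ↑s ∧ s.card = c}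

/-- The wreath product permutation of `{0,...,nk-1}` built from `η ∈ S_n` and
`γ_1,...,γ_n ∈ S_k`: position `(i,j)` (i.e. `i*k + j`) is sent to `(η i, γ i j)`. -/
def wreathPerm {n k : ℕ} (η : Equiv.Perm (Fin n)) (γ : Fin n → Equiv.Perm (Fin k)) :
    Equiv.Perm (Fin (n * k)) :=
  finProdFinEquiv.symm.trans ((Equiv.prodCongrRight γ).trans
    ((η.prodCongr (Equiv.refl (Fin k))).trans finProdFinEquiv))

/-- The block (of size `k`) containing a position. -/
def blockOf {n k : ℕ} (p : Fin (n * k)) : Fin n := (finProdFinEquiv.symm p).1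

/-- The position within its block. -/
def posIn {n k : ℕ} (p : Fin (n * k)) : Fin k := (finProdFinEquiv.symm p).2

lemma val_eq {n k : ℕ} (p : Fin (n * k)) :
    (p : ℕ) = k * (blockOf p : ℕ) + (posIn p : ℕ) := by
  conv_lhs => rw [← finProdFinEquiv.apply_symm_apply p]
  simp [blockOf, posIn, finProdFinEquiv]
  ring

lemma key_mul {k a b : ℕ} (h : a < b) : k * a + k ≤ k * b := by
  have := Nat.mul_le_mul_left k h
  calc k * a + k = k * (a + 1) := by ring
    _ ≤ k * b := Nat.mul_le_mul_left k h

lemma lt_iff {n k : ℕ} (p q : Fin (n * k)) :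
    p < q ↔ blockOf p < blockOf q ∨ (blockOf p = blockOf q ∧ posIn p < posIn q) := by
  have h1 := val_eq p
  have h2 := val_eq q
  have b1 := (posIn p).2
  have b2 := (posIn q).2
  constructor
  · intro h
    have hlt : (p : ℕ) < q := h
    rcases lt_trichotomy (blockOf p) (blockOf q) with h' | h' | h'
    · exact Or.inl h'
    · refine Or.inr ⟨h', ?_⟩
      have : k * (blockOf p : ℕ) = k * blockOf q := by rw [h']
      rw [Fin.lt_def]; omega
    · exfalso
      have := key_mul (k := k) h'
      omega
  · rintro (h | ⟨h, h'⟩)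
    · have := key_mul (k := k) h
      rw [Fin.lt_def]; omega
    · have : k * (blockOf p : ℕ) = k * blockOf q := by rw [h]
      have : (posIn p : ℕ) < posIn q := h'
      rw [Fin.lt_def]; omega

lemma blockOf_wreath {n k : ℕ} (η : Equiv.Perm (Fin n)) (γ : Fin n → Equiv.Perm (Fin k))
    (p : Fin (n * k)) : blockOf (wreathPerm η γ p) = η (blockOf p) := by
  simp [blockOf, posIn, wreathPerm]

lemma posIn_wreath {n k : ℕ} (η : Equiv.Perm (Fin n)) (γ : Fin n → Equiv.Perm (Fin k))
    (p : Fin (n * k)) : posIn (wreathPerm η γ p) = γ (blockOf p) (posIn p) := by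
  simp [blockOf, posIn, wreathPerm]

lemma le_lisLen {m : ℕ} (σ : Equiv.Perm (Fin m)) (s : Finset (Fin m))
    (h : StrictMonoOn σ ↑s) : s.card ≤ lisLen σ := by
  apply le_csSup
  · refine ⟨m, ?_⟩
    rintro c ⟨s, -, rfl⟩
    simpa using s.card_le_univ
  · exact ⟨s, h, rfl⟩

lemma lisLen_le {m b : ℕ} (σ : Equiv.Perm (Fin m))
    (h : ∀ s : Finset (Fin m), StrictMonoOn σ ↑s → s.card ≤ b) : lisLen σ ≤ b := by
  have h0 : (0 : ℕ) ∈ {c | ∃ s : Finset (Fin m), StrictMonoOn σ ↑s ∧ s.card = c} :=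
    ⟨∅, by rw [Finset.coe_empty]; rintro x hx; exact absurd hx (Set.notMem_empty x), by simp⟩
  apply csSup_le ⟨0, h0⟩
  rintro c ⟨s, hs, rfl⟩
  exact h s hs

/-- `L(σ) ≤ L(η) · max_{1≤i≤n} L(γ_i)` for the wreath product permutation. -/
theorem stmt2 {n k : ℕ} (η : Equiv.Perm (Fin n)) (γ : Fin n → Equiv.Perm (Fin k)) :
    lisLen (wreathPerm η γ) ≤ lisLen η * (univ.sup fun i => lisLen (γ i)) := by
  apply lisLen_le
  intro s hs
  set σ := wreathPerm η γ with hσ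
  set t := s.image blockOf with ht
  -- η is strictly monotone on t
  have hη : StrictMonoOn η ↑t := by
    rintro a ha b hb hab
    simp only [ht, coe_image, Set.mem_image, mem_coe] at ha hb
    obtain ⟨p, hp, rfl⟩ := ha
    obtain ⟨q, hq, rfl⟩ := hb
    have hpq : p < q := (lt_iff p q).2 (Or.inl hab)
    have hσpq := hs hp hq hpq
    rcases (lt_iff (σ p) (σ q)).1 hσpq with h | ⟨h, -⟩
    · rwa [blockOf_wreath, blockOf_wreath] at h
    · exfalso
      rw [blockOf_wreath, blockOf_wreath] at h
      exact absurd (η.injective h) (ne_of_lt hab)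
  -- fiberwise count
  have hcard : s.card = ∑ i ∈ t, (s.filter fun p => blockOf p = i).card := by
    apply Finset.card_eq_sum_card_fiberwise
    intro p hp
    exact mem_image_of_mem _ hp
  have hfiber : ∀ i ∈ t, (s.filter fun p => blockOf p = i).card ≤ lisLen (γ i) := by
    intro i _
    set si := s.filter fun p => blockOf p = i with hsi
    have hinj : Set.InjOn (posIn (n := n) (k := k)) ↑si := by
      intro p hp q hq hpq
      simp only [hsi, coe_filter, Set.mem_setOf_eq] at hp hq
      have := val_eq p
      have := val_eq q
      have h1 : k * (blockOf p : ℕ) = k * blockOf q := by rw [hp.2, hq.2]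
      have h2 : (posIn p : ℕ) = posIn q := congrArg Fin.val hpq
      exact Fin.val_injective (by omega)
    calc si.card = (si.image posIn).card :=
          (Finset.card_image_of_injOn hinj).symm
      _ ≤ lisLen (γ i) := by
        apply le_lisLen
        rintro a ha b hb hab
        simp only [coe_image, Set.mem_image, mem_coe, hsi, mem_filter] at ha hb
        obtain ⟨p, ⟨hp, hpi⟩, rfl⟩ := ha
        obtain ⟨q, ⟨hq, hqi⟩, rfl⟩ := hb
        have hpq : p < q := (lt_iff p q).2 (Or.inr ⟨hpi.trans hqi.symm, hab⟩)
        have hσpq := hs hp hq hpq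
        rcases (lt_iff (σ p) (σ q)).1 hσpq with h | ⟨-, h⟩
        · exfalso
          rw [blockOf_wreath, blockOf_wreath, hpi, hqi] at h
          exact lt_irrefl _ h
        · rw [posIn_wreath, posIn_wreath, hpi, hqi] at h
          exact h
  calc s.card = ∑ i ∈ t, (s.filter fun p => blockOf p = i).card := hcard
    _ ≤ ∑ i ∈ t, (univ.sup fun i => lisLen (γ i)) := by
        apply Finset.sum_le_sum
        intro i hi
        exact (hfiber i hi).trans (Finset.le_sup (f := fun i => lisLen (γ i)) (mem_univ i))
    _ = t.card * (univ.sup fun i => lisLen (γ i)) := by rw [Finset.sum_const, smul_eq_mul]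
    _ ≤ lisLen η * (univ.sup fun i => lisLen (γ i)) :=
        Nat.mul_le_mul_right _ (le_lisLen η t hη)
end

section
/- For the wreath product permutation built from η ∈ S_n and γ_1,...,γ_n ∈ S_k, L(σ) ≥ max over increasing subsequences i_1 < ... < i_m of η of Σ_{t=1}^m L(γ_{i_t}). In particular, L(σ) ≥ L(η) · min_i L(γ_i). -/
open Finset

/-!
Positions of `Fin (n * k)` are pairs (block, offset) ordered lexicographically, and the wreath
permutation acts lexicographically as `(i, j) ↦ (η i, γ i j)`. So if `s` is a set of blocks on
which `η` increases and `t i` is an increasing set of offsets for `γ i`, the union of the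
blocks `{i} × t i` over `i ∈ s` is increasing for the wreath permutation: two positions in
different blocks are compared by `η`, two in the same block by `γ i`. Taking `t i` of size
`L(γ i)` gives the sum bound, and taking `s` of size `L(η)` gives the product bound.
-/

lemma finProdFinEquiv_lt_of_toLex_lt {m n : ℕ} {x y : Fin m × Fin n}
    (h : toLex x < toLex y) : finProdFinEquiv x < finProdFinEquiv y := by
  obtain ⟨a, c⟩ := x
  obtain ⟨b, d⟩ := y
  simp only [Fin.lt_def, finProdFinEquiv_apply_val]
  rcases Prod.Lex.toLex_lt_toLex.mp h with hab | ⟨rfl, hcd⟩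
  · have hab' : n * ((a : ℕ) + 1) ≤ n * b := Nat.mul_le_mul_left n (Fin.lt_def.mp hab)
    rw [mul_add_one] at hab'
    omega
  · exact Nat.add_lt_add_right (Fin.lt_def.mp hcd) _

lemma finProdFinEquiv_lt_finProdFinEquiv {m n : ℕ} {x y : Fin m × Fin n} :
    finProdFinEquiv x < finProdFinEquiv y ↔ toLex x < toLex y :=
  (show StrictMono (finProdFinEquiv ∘ ofLex) from
    fun _ _ => finProdFinEquiv_lt_of_toLex_lt).lt_iff_lt

lemma wreathPerm_apply {n k : ℕ} (η : Equiv.Perm (Fin n)) (γ : Fin n → Equiv.Perm (Fin k))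
    (i : Fin n) (j : Fin k) :
    wreathPerm η γ (finProdFinEquiv (i, j)) = finProdFinEquiv (η i, γ i j) := by
  simp [wreathPerm]

lemma lisLen_bddAbove {m : ℕ} (σ : Equiv.Perm (Fin m)) :
    BddAbove {c | ∃ s : Finset (Fin m), StrictMonoOn σ ↑s ∧ s.card = c} :=
  ⟨m, by rintro c ⟨s, -, rfl⟩; simpa using s.card_le_univ⟩

lemma card_le_lisLen {m : ℕ} {σ : Equiv.Perm (Fin m)} {s : Finset (Fin m)}
    (h : StrictMonoOn σ ↑s) : s.card ≤ lisLen σ :=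
  le_csSup (lisLen_bddAbove σ) ⟨s, h, rfl⟩

lemma exists_card_eq_lisLen {m : ℕ} (σ : Equiv.Perm (Fin m)) :
    ∃ s : Finset (Fin m), StrictMonoOn σ ↑s ∧ s.card = lisLen σ :=
  (Nat.sSup_mem · (lisLen_bddAbove σ)) ⟨0, ∅, by simp [StrictMonoOn], rfl⟩

/-- The positions `i * k + j` with `i ∈ s` and `j ∈ t i`. -/
def blockUnion {n k : ℕ} (s : Finset (Fin n)) (t : Fin n → Finset (Fin k)) :
    Finset (Fin (n * k)) :=
  (s.sigma t).map ((Equiv.sigmaEquivProd _ _).trans finProdFinEquiv).toEmbedding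

lemma card_blockUnion {n k : ℕ} (s : Finset (Fin n)) (t : Fin n → Finset (Fin k)) :
    (blockUnion s t).card = ∑ i ∈ s, (t i).card := by
  rw [blockUnion, card_map, card_sigma]

lemma strictMonoOn_wreathPerm_blockUnion {n k : ℕ} {η : Equiv.Perm (Fin n)}
    {γ : Fin n → Equiv.Perm (Fin k)} {s : Finset (Fin n)} {t : Fin n → Finset (Fin k)}
    (hη : StrictMonoOn η ↑s) (hγ : ∀ i ∈ s, StrictMonoOn (γ i) ↑(t i)) :
    StrictMonoOn (wreathPerm η γ) ↑(blockUnion s t) := by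
  simp only [blockUnion, coe_map, Set.forall_mem_image, StrictMonoOn, mem_coe, mem_sigma]
  rintro ⟨i, j⟩ ⟨hi, hj⟩ ⟨i', j'⟩ ⟨hi', hj'⟩ hlt
  simp only [Equiv.coe_toEmbedding, Equiv.coe_trans, Function.comp_apply,
    Equiv.sigmaEquivProd_apply, wreathPerm_apply, finProdFinEquiv_lt_finProdFinEquiv,
    Prod.Lex.toLex_lt_toLex] at hlt ⊢
  rcases hlt with hii' | ⟨rfl, hjj'⟩
  · exact Or.inl (hη hi hi' hii')
  · exact Or.inr ⟨rfl, hγ i hi hj hj' hjj'⟩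

theorem sum_lisLen_le_lisLen_wreathPerm {n k : ℕ} {η : Equiv.Perm (Fin n)}
    (γ : Fin n → Equiv.Perm (Fin k)) {s : Finset (Fin n)} (hs : StrictMonoOn η ↑s) :
    ∑ i ∈ s, lisLen (γ i) ≤ lisLen (wreathPerm η γ) := by
  choose t ht hcard using fun i => exists_card_eq_lisLen (γ i)
  calc ∑ i ∈ s, lisLen (γ i) = (blockUnion s t).card := by
        rw [card_blockUnion]; simp only [hcard]
    _ ≤ lisLen (wreathPerm η γ) :=
        card_le_lisLen (strictMonoOn_wreathPerm_blockUnion hs fun i _ => ht i)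

/-- `L(σ)` is at least the sum of within-block LIS lengths over any increasing
subsequence of blocks under `η`; in particular `L(σ) ≥ L(η) · min_i L(γ_i)`. -/
theorem stmt3 {n k : ℕ} (η : Equiv.Perm (Fin n)) (γ : Fin n → Equiv.Perm (Fin k)) :
    (∀ s : Finset (Fin n), StrictMonoOn η ↑s →
      ∑ i ∈ s, lisLen (γ i) ≤ lisLen (wreathPerm η γ)) ∧
    lisLen η * sInf (Set.range fun i => lisLen (γ i)) ≤ lisLen (wreathPerm η γ) := by
  refine ⟨fun s hs => sum_lisLen_le_lisLen_wreathPerm γ hs, ?_⟩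
  obtain ⟨s, hs, hcard⟩ := exists_card_eq_lisLen η
  calc lisLen η * sInf (Set.range fun i => lisLen (γ i))
      = ∑ _i ∈ s, sInf (Set.range fun i => lisLen (γ i)) := by
        rw [sum_const, hcard, smul_eq_mul]
    _ ≤ ∑ i ∈ s, lisLen (γ i) := sum_le_sum fun i _ => Nat.sInf_le ⟨i, rfl⟩
    _ ≤ lisLen (wreathPerm η γ) := sum_lisLen_le_lisLen_wreathPerm γ hs
end

section
/- For a uniformly random permutation of {1,...,k}, the expected length of the longest increasing subsequence satisfies E(L_k) ≤ e√k for all k ≥ 1. -/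
open Finset

open Nat Real

/-!
A permutation that is increasing on a fixed set of `j` positions is determined by its values
off that set, so at most `k! / j!` permutations are. A union bound over the `C(k, j)` sets and
Stirling's formula give `P(L_k ≥ j) ≤ C(k, j) / j! ≤ (e√k / j)^(2j) / (2πj)`. In
`E L_k = ∑_{j ≥ 1} P(L_k ≥ j)` bound the terms with `j ≤ M = ⌊e√k - 1/2⌋` by `1`; beyond `M`
the bounds `(e√k / j)^(2j)` start below `e` and shrink by a factor `3` at each step, so the
tail is at most `3e / (8π) < 1/2`, and `E L_k ≤ M + 1/2 ≤ e√k`.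
-/

theorem StrictMonoOn.eqOn_of_image_eq {α β : Type*} [LinearOrder α] [WellFoundedLT α]
    [Preorder β] {f g : α → β} {s : Set α} (hf : StrictMonoOn f s) (hg : StrictMonoOn g s)
    (h : f '' s = g '' s) : Set.EqOn f g s := by
  have := (hf.domRestrict.range_inj hg.domRestrict).1 (by rwa [Set.range_domRestrict,
    Set.range_domRestrict])
  exact fun x hx => congrFun this ⟨x, hx⟩

theorem Equiv.Perm.eq_of_strictMonoOn_of_eqOn_compl {α : Type*} [LinearOrder α]
    [WellFoundedLT α] {σ τ : Equiv.Perm α} {s : Set α} (hσ : StrictMonoOn σ s)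
    (hτ : StrictMonoOn τ s) (h : Set.EqOn σ τ sᶜ) : σ = τ := by
  have himage : σ '' s = τ '' s := by
    rw [← compl_compl (σ '' s), ← Set.image_compl_eq σ.bijective, h.image_eq,
      Set.image_compl_eq τ.bijective, compl_compl]
  ext x
  by_cases hx : x ∈ s
  · exact hσ.eqOn_of_image_eq hτ himage hx
  · exact h hx

theorem card_filter_strictMonoOn_mul_factorial_le {α : Type*} [Fintype α] [LinearOrder α]
    (s : Finset α) :
    #{σ : Equiv.Perm α | StrictMonoOn σ s} * (#s)! ≤ (Fintype.card α)! := by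
  classical
  have hinj : #{σ : Equiv.Perm α | StrictMonoOn σ s} ≤ Fintype.card (↥(sᶜ : Finset α) ↪ α) := by
    rw [← Finset.card_univ]
    refine card_le_card_of_injOn (fun σ => (Function.Embedding.subtype _).trans σ.toEmbedding)
      (fun _ _ => mem_univ _) fun σ hσ τ hτ h => ?_
    simp only [coe_filter, mem_univ, true_and, Set.mem_ofPred_eq] at hσ hτ
    refine Equiv.Perm.eq_of_strictMonoOn_of_eqOn_compl hσ hτ fun x hx => ?_
    exact DFunLike.congr_fun h ⟨x, by simpa using hx⟩
  rw [Fintype.card_embedding_eq, Fintype.card_coe, card_compl] at hinj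
  calc _ ≤ (Fintype.card α).descFactorial (Fintype.card α - #s) * (#s)! :=
        Nat.mul_le_mul_right _ hinj
    _ = (Fintype.card α)! := by
        conv_rhs => rw [← Nat.factorial_mul_descFactorial (Nat.sub_le _ (#s)),
          Nat.sub_sub_self (card_le_univ s)]
        rw [mul_comm]

section lisLen

variable {m : ℕ} (σ : Equiv.Perm (Fin m))

theorem lisLen_set_nonempty :
    {c | ∃ s : Finset (Fin m), StrictMonoOn σ ↑s ∧ #s = c}.Nonempty :=
  ⟨0, ∅, by simp [StrictMonoOn], rfl⟩

theorem lisLen_set_subset_Iic :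
    {c | ∃ s : Finset (Fin m), StrictMonoOn σ ↑s ∧ #s = c} ⊆ Set.Iic m := by
  rintro _ ⟨s, -, rfl⟩
  simpa using card_le_univ s

theorem lisLen_le_s8 : lisLen σ ≤ m :=
  csSup_le (lisLen_set_nonempty σ) (lisLen_set_subset_Iic σ)

theorem exists_card_eq_strictMonoOn_of_le_lisLen {j : ℕ} (hj : j ≤ lisLen σ) :
    ∃ s : Finset (Fin m), #s = j ∧ StrictMonoOn σ s := by
  obtain ⟨s, hσs, hs⟩ :=
    Nat.sSup_mem (lisLen_set_nonempty σ) ⟨m, lisLen_set_subset_Iic σ⟩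
  obtain ⟨t, hts, rfl⟩ := exists_subset_card_eq (hj.trans_eq hs.symm)
  exact ⟨t, rfl, hσs.mono (mod_cast hts)⟩

end lisLen

theorem card_le_lisLen_mul_factorial_le (m j : ℕ) :
    #{σ : Equiv.Perm (Fin m) | j ≤ lisLen σ} * j ! ≤ m.choose j * m ! := by
  have hcover : ({σ | j ≤ lisLen σ} : Finset (Equiv.Perm (Fin m))) ⊆
      (powersetCard j univ).biUnion fun s : Finset (Fin m) => {σ | StrictMonoOn σ s} := by
    intro σ hσ
    obtain ⟨s, hs, hσs⟩ := exists_card_eq_strictMonoOn_of_le_lisLen σ (mem_filter.1 hσ).2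
    exact mem_biUnion.2 ⟨s, mem_powersetCard.2 ⟨subset_univ s, hs⟩, by simpa using hσs⟩
  have hcount (s : Finset (Fin m)) :
      #{σ : Equiv.Perm (Fin m) | StrictMonoOn σ ↑s} * (#s)! ≤ m ! := by
    -- the filter elaborates with `Fin`-specific order and decidability instances here
    convert card_filter_strictMonoOn_mul_factorial_le s
    simp
  calc #{σ : Equiv.Perm (Fin m) | j ≤ lisLen σ} * j !
      ≤ (∑ s ∈ powersetCard j (univ : Finset (Fin m)),
          #{σ : Equiv.Perm (Fin m) | StrictMonoOn σ ↑s}) * j ! := by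
        gcongr
        exact (card_le_card hcover).trans card_biUnion_le
    _ = ∑ s ∈ powersetCard j (univ : Finset (Fin m)),
          #{σ : Equiv.Perm (Fin m) | StrictMonoOn σ ↑s} * (#s)! := by
        rw [sum_mul]
        exact sum_congr rfl fun s hs => by rw [(mem_powersetCard.1 hs).2]
    _ ≤ ∑ _s ∈ powersetCard j (univ : Finset (Fin m)), m ! :=
        sum_le_sum fun s _ => hcount s
    _ = m.choose j * m ! := by simp [card_powersetCard]

theorem Finset.sum_eq_sum_Ioc_card_filter_le {ι : Type*} (s : Finset ι) (f : ι → ℕ) {N : ℕ}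
    (hf : ∀ i ∈ s, f i ≤ N) : ∑ i ∈ s, f i = ∑ j ∈ Ioc 0 N, #{i ∈ s | j ≤ f i} := by
  simp only [card_filter]
  rw [sum_comm]
  refine sum_congr rfl fun i hi => ?_
  rw [← card_filter, show {j ∈ Ioc 0 N | j ≤ f i} = Ioc 0 (f i) by
    ext j; simp only [mem_filter, mem_Ioc]; have := hf i hi; omega]
  simp

theorem Finset.sum_Ioc_le_of_le_mul {f : ℕ → ℝ} {r : ℝ} {M : ℕ} (N : ℕ) (hr₀ : 0 ≤ r)
    (hr₁ : r < 1) (hf : 0 ≤ f (M + 1)) (hstep : ∀ j, M < j → f (j + 1) ≤ r * f j) :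
    ∑ j ∈ Ioc M N, f j ≤ f (M + 1) / (1 - r) := by
  rw [← Ico_add_one_add_one_eq_Ioc, sum_Ico_eq_sum_range]
  calc ∑ i ∈ range (N + 1 - (M + 1)), f (M + 1 + i)
      ≤ ∑ i ∈ range (N + 1 - (M + 1)), f (M + 1) * r ^ i :=
        sum_le_sum fun i _ => (le_geom (u := fun i => f (M + 1 + i)) hr₀ i
          fun k _ => hstep (M + 1 + k) (by omega)).trans_eq (mul_comm _ _)
    _ = f (M + 1) * ∑ i ∈ Ico 0 (N + 1 - (M + 1)), r ^ i := by rw [mul_sum, range_eq_Ico]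
    _ ≤ f (M + 1) * (r ^ 0 / (1 - r)) := by gcongr; exact geom_sum_Ico_le_of_lt_one hr₀ hr₁
    _ = f (M + 1) / (1 - r) := by ring

theorem div_pow_le_exp_one {t : ℝ} {M : ℕ} (ht₀ : 0 ≤ t) (ht : t ≤ M + 3 / 2) :
    (t / (M + 1 : ℕ)) ^ (2 * (M + 1)) ≤ exp 1 :=
  calc (t / (M + 1 : ℕ)) ^ (2 * (M + 1))
      ≤ (1 + ((2 * (M + 1) : ℕ) : ℝ)⁻¹) ^ (2 * (M + 1)) := by
        gcongr
        rw [div_le_iff₀ (by positivity)]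
        push_cast
        field_simp
        linarith
    _ ≤ exp 1 := one_add_inv_pow_le_exp

theorem div_pow_succ_le_third {t : ℝ} {j : ℕ} (ht₀ : 0 ≤ t) (ht : t ≤ j + 1) (hj : 0 < j) :
    (t / (j + 1 : ℕ)) ^ (2 * (j + 1)) ≤ 1 / 3 * (t / j) ^ (2 * j) := by
  have hj' : (0 : ℝ) < j := mod_cast hj
  have hbernoulli : 3 ≤ (1 + (j : ℝ)⁻¹) ^ (2 * j) := by
    have := one_add_mul_le_pow (a := (j : ℝ)⁻¹) (by linarith [inv_pos.2 hj']) (2 * j)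
    push_cast at this
    rwa [mul_assoc, mul_inv_cancel₀ hj'.ne', show (1 : ℝ) + 2 * 1 = 3 by norm_num] at this
  have hsplit : (t / (j + 1 : ℕ)) ^ (2 * (j + 1))
      = (t / (j + 1)) ^ 2 * ((t / j) ^ (2 * j) / (1 + (j : ℝ)⁻¹) ^ (2 * j)) := by
    push_cast
    rw [← div_pow, show t / j / (1 + (j : ℝ)⁻¹) = t / (j + 1) by field_simp, ← pow_add]
    ring_nf
  rw [hsplit]
  calc (t / (j + 1)) ^ 2 * ((t / j) ^ (2 * j) / (1 + (j : ℝ)⁻¹) ^ (2 * j))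
      ≤ 1 * ((t / j) ^ (2 * j) / 3) := by
        gcongr
        exact pow_le_one₀ (by positivity) ((div_le_one (by positivity)).2 ht)
    _ = 1 / 3 * (t / j) ^ (2 * j) := by ring

theorem sum_Ioc_div_pow_le {t : ℝ} {M : ℕ} (N : ℕ) (ht₀ : 0 ≤ t) (ht : t ≤ M + 3 / 2) :
    ∑ j ∈ Ioc M N, (t / j) ^ (2 * j) ≤ 3 / 2 * exp 1 := by
  have hstep (j : ℕ) (hj : M < j) :
      (t / (j + 1 : ℕ)) ^ (2 * (j + 1)) ≤ 1 / 3 * (t / j) ^ (2 * j) := by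
    have : (M : ℝ) + 1 ≤ j := mod_cast hj
    exact div_pow_succ_le_third ht₀ (by linarith) (by omega)
  calc ∑ j ∈ Ioc M N, (t / j) ^ (2 * j)
      ≤ (t / (M + 1 : ℕ)) ^ (2 * (M + 1)) / (1 - 1 / 3) :=
        sum_Ioc_le_of_le_mul (f := fun j : ℕ => (t / j) ^ (2 * j)) N (by norm_num) (by norm_num)
          (by positivity) hstep
    _ ≤ exp 1 / (1 - 1 / 3) := by gcongr; exact div_pow_le_exp_one ht₀ ht
    _ = 3 / 2 * exp 1 := by ring

theorem choose_div_factorial_le {m j : ℕ} (hj : j ≠ 0) :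
    (m.choose j : ℝ) / j ! ≤ (exp 1 * √m / j) ^ (2 * j) / (2 * π * j) := by
  have hstirling : 2 * π * j * (j / exp 1) ^ (2 * j) ≤ (j ! : ℝ) ^ 2 := by
    have h := pow_le_pow_left₀ (by positivity) (Stirling.le_factorial_stirling j) 2
    rwa [mul_pow, sq_sqrt (by positivity), ← pow_mul, mul_comm j 2] at h
  have hj' : (0 : ℝ) < j := by positivity
  calc (m.choose j : ℝ) / j ! ≤ (m : ℝ) ^ j / j ! / j ! := by
        gcongr; exact Nat.choose_le_pow_div j m
    _ = (m : ℝ) ^ j / (j ! : ℝ) ^ 2 := by ring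
    _ ≤ (m : ℝ) ^ j / (2 * π * j * (j / exp 1) ^ (2 * j)) := by gcongr
    _ = (exp 1 * √m / j) ^ (2 * j) / (2 * π * j) := by
        rw [div_pow (exp 1 * √m), mul_pow, pow_mul √(m : ℝ), sq_sqrt (by positivity), div_pow]
        field_simp

theorem card_le_lisLen_le_factorial_mul {m j : ℕ} (hj : j ≠ 0) :
    (#{σ : Equiv.Perm (Fin m) | j ≤ lisLen σ} : ℝ)
      ≤ m ! * ((exp 1 * √m / j) ^ (2 * j) / (2 * π * j)) := by
  have h : (#{σ : Equiv.Perm (Fin m) | j ≤ lisLen σ} : ℝ) * j ! ≤ m.choose j * m ! :=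
    mod_cast card_le_lisLen_mul_factorial_le m j
  calc (#{σ : Equiv.Perm (Fin m) | j ≤ lisLen σ} : ℝ) ≤ m ! * ((m.choose j : ℝ) / j !) := by
        rw [mul_div_assoc', le_div_iff₀ (by positivity), mul_comm (m ! : ℝ)]
        exact h
    _ ≤ m ! * ((exp 1 * √m / j) ^ (2 * j) / (2 * π * j)) := by
        gcongr ?_ * ?_
        exact choose_div_factorial_le hj

theorem sum_Ioc_card_le_lisLen_le_half_factorial {m M : ℕ} (N : ℕ) (hM : 1 ≤ M)
    (ht : exp 1 * √m ≤ M + 3 / 2) :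
    ∑ j ∈ Ioc M N, (#{σ : Equiv.Perm (Fin m) | j ≤ lisLen σ} : ℝ) ≤ m ! / 2 := by
  have hterm (j : ℕ) (hj : j ∈ Ioc M N) : (#{σ : Equiv.Perm (Fin m) | j ≤ lisLen σ} : ℝ)
      ≤ m ! / (4 * π) * (exp 1 * √m / j) ^ (2 * j) := by
    have hMj := (mem_Ioc.1 hj).1
    have h2j : (2 : ℝ) ≤ j := mod_cast (by omega : 2 ≤ j)
    calc _ ≤ m ! * ((exp 1 * √m / j) ^ (2 * j) / (2 * π * j)) :=
          card_le_lisLen_le_factorial_mul (by omega)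
      _ ≤ m ! * ((exp 1 * √m / j) ^ (2 * j) / (2 * π * 2)) := by gcongr
      _ = m ! / (4 * π) * (exp 1 * √m / j) ^ (2 * j) := by ring
  calc ∑ j ∈ Ioc M N, (#{σ : Equiv.Perm (Fin m) | j ≤ lisLen σ} : ℝ)
      ≤ m ! / (4 * π) * ∑ j ∈ Ioc M N, (exp 1 * √m / j) ^ (2 * j) := by
        rw [mul_sum]; exact sum_le_sum hterm
    _ ≤ m ! / (4 * π) * (3 / 2 * exp 1) := by
        gcongr; exact sum_Ioc_div_pow_le N (by positivity) ht
    _ ≤ m ! / 2 := by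
        rw [div_mul_eq_mul_div, div_le_div_iff₀ (by positivity) (by norm_num)]
        have : exp 1 < 3 := lt_trans exp_one_lt_d9 (by norm_num)
        have := pi_gt_three
        have : (0 : ℝ) < m ! := by positivity
        nlinarith

/-- The expected LIS length of a uniformly random permutation of `{1,...,k}` is at
most `e√k` for all `k ≥ 1`. -/
theorem stmt8 (k : ℕ) (hk : 1 ≤ k) :
    (∑ σ : Equiv.Perm (Fin k), (lisLen σ : ℝ)) / (Nat.factorial k)
      ≤ Real.exp 1 * Real.sqrt k := by
  set t := exp 1 * √k
  set M := ⌊t - 1 / 2⌋₊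
  have ht : 3 / 2 ≤ t := by
    have : (1 : ℝ) ≤ √k := one_le_sqrt.2 (mod_cast hk)
    have : (2 : ℝ) ≤ exp 1 := by linarith [add_one_le_exp (1 : ℝ)]
    nlinarith
  have hM : 1 ≤ M := Nat.le_floor (by push_cast; linarith)
  have hMt : (M : ℝ) + 1 / 2 ≤ t := by linarith [Nat.floor_le (show 0 ≤ t - 1 / 2 by linarith)]
  have htM : t ≤ M + 3 / 2 := by linarith [Nat.lt_floor_add_one (t - 1 / 2)]
  have hhead : ∑ j ∈ Ioc 0 M, (#{σ : Equiv.Perm (Fin k) | j ≤ lisLen σ} : ℝ) ≤ M * k ! := by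
    refine (sum_le_card_nsmul _ _ (k ! : ℝ) fun j _ => ?_).trans_eq (by simp)
    exact_mod_cast (card_filter_le _ _).trans_eq (by simp [Fintype.card_perm])
  rw [div_le_iff₀ (by positivity)]
  -- summing up to `M + k` instead of `k` allows the split at `M` even if `M > k`
  calc ∑ σ : Equiv.Perm (Fin k), (lisLen σ : ℝ)
      = ∑ j ∈ Ioc 0 (M + k), (#{σ : Equiv.Perm (Fin k) | j ≤ lisLen σ} : ℝ) := mod_cast
        sum_eq_sum_Ioc_card_filter_le _ _ fun σ _ => (lisLen_le_s8 σ).trans (Nat.le_add_left k M)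
    _ = ∑ j ∈ Ioc 0 M, (#{σ : Equiv.Perm (Fin k) | j ≤ lisLen σ} : ℝ)
          + ∑ j ∈ Ioc M (M + k), (#{σ : Equiv.Perm (Fin k) | j ≤ lisLen σ} : ℝ) :=
        (sum_Ioc_consecutive _ (Nat.zero_le M) (Nat.le_add_right M k)).symm
    _ ≤ M * k ! + k ! / 2 := add_le_add hhead (sum_Ioc_card_le_lisLen_le_half_factorial _ hM htM)
    _ ≤ t * k ! := by nlinarith [(by positivity : (0 : ℝ) < k !)]
end
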